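/- Let μ ≥ 0, τ > 0, C₁, C₂, a ≥ 0, M ≥ 1, and let f : [0,∞) → [0,∞) be continuous and satisfy f(t) ≤ M e^{−μt} a + ∫₀ᵗ e^{−μ(t−s)} (C₁ f(s) + C₂ f(τ⌊s/τ⌋)) ds for all t ≥ 0. Then f(t) ≤ M a e^{(C₁ + C₂ e^{μτ} − μ) t} for all t ≥ 0. -/

import Mathlib

/-!
Put `g(t) = e^{μt} f(t)`. The hypothesis becomes a delay Gronwall inequality
`g(t) ≤ M a + ∫₀ᵗ (C₁ g(s) + w(s) g(τ⌊s/τ⌋)) ds` with `0 ≤ w(s) = C₂ e^{μ(s - τ⌊s/τ⌋)} ≤ C₂ e^{μτ}`,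
because the frozen time lags `s` by less than `τ`. For every `ε > 0` the increasing barrier
`(M a + ε) e^{(C₁ + C₂ e^{μτ}) t}` bounds both `g(s)` and the delayed value `g(τ⌊s/τ⌋)` up to the first
time `g` could reach it, and integrating the barrier shows that `g` stays strictly below it there;
so `g` never reaches it, and letting `ε → 0` gives the bound.
-/

open Set MeasureTheory Filter Topology

lemma forall_lt_of_forall_le_Ico_imp_lt {f b : ℝ → ℝ} {a : ℝ} (hf : ContinuousOn f (Ici a))
    (hb : ContinuousOn b (Ici a)) (step : ∀ t ≥ a, (∀ s ∈ Ico a t, f s ≤ b s) → f t < b t) :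
    ∀ t ≥ a, f t < b t := by
  by_contra! hbad
  set S := Ici a ∩ (b - f) ⁻¹' Iic 0
  have hS_closed : IsClosed S := (hb.sub hf).preimage_isClosed_of_isClosed isClosed_Ici isClosed_Iic
  have hS_ne : S.Nonempty := by
    obtain ⟨t, ht, hle⟩ := hbad
    exact ⟨t, ht, by simpa using hle⟩
  have hS_bdd : BddBelow S := ⟨a, fun _ hs => hs.1⟩
  have ht₀ : sInf S ∈ S := hS_closed.csInf_mem hS_ne hS_bdd
  have hbelow : ∀ s ∈ Ico a (sInf S), f s ≤ b s := fun s hs => by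
    by_contra! hlt
    exact (csInf_le hS_bdd ⟨hs.1, by simpa using hlt.le⟩).not_gt hs.2
  have := step _ ht₀.1 hbelow
  simp only [S, mem_inter_iff, mem_preimage, Pi.sub_apply, mem_Iic] at ht₀
  linarith

lemma intervalIntegral.integral_le_of_le_Ioo_of_nonneg {f g : ℝ → ℝ} {a b : ℝ} (hab : a ≤ b)
    (hg : IntervalIntegrable g volume a b) (hg0 : ∀ x ∈ Icc a b, 0 ≤ g x)
    (hfg : ∀ x ∈ Ioo a b, f x ≤ g x) : ∫ x in a..b, f x ≤ ∫ x in a..b, g x := by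
  by_cases hf : IntervalIntegrable f volume a b
  · exact integral_mono_on_of_le_Ioo hab hf hg hfg
  · rw [integral_undef hf]
    exact integral_nonneg hab hg0

lemma integral_mul_exp_mul (L t : ℝ) :
    ∫ s in (0 : ℝ)..t, L * Real.exp (L * s) = Real.exp (L * t) - 1 := by
  have hderiv : ∀ s ∈ uIcc 0 t, HasDerivAt (fun s => Real.exp (L * s)) (L * Real.exp (L * s)) s :=
    fun s _ => by simpa [mul_comm] using ((hasDerivAt_id s).const_mul L).exp
  rw [intervalIntegral.integral_eq_sub_of_hasDerivAt hderiv
    ((by fun_prop : Continuous _).intervalIntegrable _ _)]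
  simp

theorem le_mul_exp_of_le_add_integral_delay {g w δ : ℝ → ℝ} {A C D : ℝ} (hA : 0 ≤ A) (hC : 0 ≤ C)
    (hw : ∀ s > 0, w s ∈ Icc 0 D) (hδ : ∀ s > 0, δ s ∈ Icc 0 s) (hg : ContinuousOn g (Ici 0))
    (hineq : ∀ t ≥ 0, g t ≤ A + ∫ s in (0 : ℝ)..t, (C * g s + w s * g (δ s))) :
    ∀ t ≥ 0, g t ≤ A * Real.exp ((C + D) * t) := by
  have hD : 0 ≤ D := (hw 1 one_pos).1.trans (hw 1 one_pos).2
  set L := C + D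
  have hstrict : ∀ ε > 0, ∀ t ≥ 0, g t < (A + ε) * Real.exp (L * t) := by
    intro ε hε
    refine forall_lt_of_forall_le_Ico_imp_lt hg (by fun_prop) fun t ht hle => ?_
    have hpt : ∀ s ∈ Ioo 0 t,
        C * g s + w s * g (δ s) ≤ (A + ε) * (L * Real.exp (L * s)) := by
      rintro s ⟨hs0, hst⟩
      obtain ⟨hw0, hwD⟩ := hw s hs0
      obtain ⟨hδ0, hδs⟩ := hδ s hs0
      have hgs := hle s ⟨hs0.le, hst⟩
      have hgδ : g (δ s) ≤ (A + ε) * Real.exp (L * s) :=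
        (hle _ ⟨hδ0, hδs.trans_lt hst⟩).trans (by gcongr)
      calc C * g s + w s * g (δ s)
          ≤ C * ((A + ε) * Real.exp (L * s)) + w s * ((A + ε) * Real.exp (L * s)) := by gcongr
        _ ≤ C * ((A + ε) * Real.exp (L * s)) + D * ((A + ε) * Real.exp (L * s)) := by gcongr
        _ = (A + ε) * (L * Real.exp (L * s)) := by ring
    have hint := intervalIntegral.integral_le_of_le_Ioo_of_nonneg ht
      ((by fun_prop : Continuous _).intervalIntegrable _ _) (fun s _ => by positivity) hpt
    rw [intervalIntegral.integral_const_mul, integral_mul_exp_mul] at hint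
    linarith [hineq t ht]
  intro t ht
  have hlim : Tendsto (fun ε => (A + ε) * Real.exp (L * t)) (𝓝[>] 0)
      (𝓝 (A * Real.exp (L * t))) := by
    simpa using ((by fun_prop : Continuous fun ε => (A + ε) * Real.exp (L * t)).tendsto 0).mono_left
      nhdsWithin_le_nhds
  exact ge_of_tendsto hlim (eventually_nhdsWithin_of_forall fun ε hε => (hstrict ε hε t ht).le)

theorem gronwall_with_frozen_delay_general
    (μ τ C₁ C₂ a M : ℝ) (hμ : 0 ≤ μ) (hτ : 0 < τ) (hC₁ : 0 ≤ C₁) (hC₂ : 0 ≤ C₂)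
    (ha : 0 ≤ a) (hM : 1 ≤ M)
    (f : ℝ → ℝ) (hfc : ContinuousOn f (Ici 0))
    (hineq : ∀ t ≥ (0 : ℝ),
      f t ≤ M * Real.exp (-μ * t) * a +
        ∫ s in (0 : ℝ)..t, Real.exp (-μ * (t - s)) * (C₁ * f s + C₂ * f (τ * (⌊s / τ⌋ : ℤ)))) :
    ∀ t ≥ (0 : ℝ), f t ≤ M * a * Real.exp ((C₁ + C₂ * Real.exp (μ * τ) - μ) * t) := by
  set q : ℝ → ℝ := fun s => τ * (⌊s / τ⌋ : ℤ)
  have hq : ∀ s > 0, q s ∈ Icc 0 s ∧ s - q s ≤ τ := fun s hs =>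
    ⟨⟨mul_nonneg hτ.le (Int.cast_nonneg (Int.floor_nonneg.mpr (by positivity))),
      by linarith [Int.sub_floor_div_mul_nonneg s hτ]⟩,
      by linarith [Int.sub_floor_div_mul_lt s hτ]⟩
  have hgineq : ∀ t ≥ (0 : ℝ), Real.exp (μ * t) * f t ≤ M * a + ∫ s in (0 : ℝ)..t,
      (C₁ * (Real.exp (μ * s) * f s) +
        C₂ * Real.exp (μ * (s - q s)) * (Real.exp (μ * q s) * f (q s))) := fun t ht =>
    calc Real.exp (μ * t) * f t
        ≤ Real.exp (μ * t) * (M * Real.exp (-μ * t) * a + ∫ s in (0 : ℝ)..t,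
            Real.exp (-μ * (t - s)) * (C₁ * f s + C₂ * f (q s))) := by gcongr; exact hineq t ht
      _ = _ := by
          rw [mul_add, ← intervalIntegral.integral_const_mul]
          congr 1
          · rw [neg_mul, Real.exp_neg]; field_simp
          · refine intervalIntegral.integral_congr fun s _ => ?_
            rw [show -μ * (t - s) = μ * s - μ * t by ring, mul_sub μ s, Real.exp_sub, Real.exp_sub]
            field_simp
  have hg := le_mul_exp_of_le_add_integral_delay (g := fun t => Real.exp (μ * t) * f t)
    (w := fun s => C₂ * Real.exp (μ * (s - q s))) (A := M * a) (D := C₂ * Real.exp (μ * τ))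
    (by nlinarith) hC₁ (fun s hs => ⟨by positivity, by grw [(hq s hs).2]⟩) (fun s hs => (hq s hs).1)
    (by fun_prop) hgineq
  intro t ht
  calc f t = Real.exp (-μ * t) * (Real.exp (μ * t) * f t) := by
        rw [← mul_assoc, ← Real.exp_add]; simp
    _ ≤ Real.exp (-μ * t) * (M * a * Real.exp ((C₁ + C₂ * Real.exp (μ * τ)) * t)) :=
        mul_le_mul_of_nonneg_left (hg t ht) (Real.exp_pos _).le
    _ = _ := by rw [mul_left_comm, ← Real.exp_add]; ring_nf

/-- A Gronwall-type lemma with a piecewise-frozen delay term: if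
`f(t) ≤ M e^{−μt} a + ∫₀ᵗ e^{−μ(t−s)} (C₁ f(s) + C₂ f(τ⌊s/τ⌋)) ds` for all `t ≥ 0`,
then `f(t) ≤ M a e^{(C₁ + C₂ e^{μτ} − μ) t}` for all `t ≥ 0`. -/
theorem gronwall_with_frozen_delay
    (μ τ C₁ C₂ a M : ℝ) (hμ : 0 ≤ μ) (hτ : 0 < τ) (hC₁ : 0 ≤ C₁) (hC₂ : 0 ≤ C₂)
    (ha : 0 ≤ a) (hM : 1 ≤ M)
    (f : ℝ → ℝ) (hfc : ContinuousOn f (Ici 0)) (hf0 : ∀ t ≥ (0 : ℝ), 0 ≤ f t)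
    (hineq : ∀ t ≥ (0 : ℝ),
      f t ≤ M * Real.exp (-μ * t) * a +
        ∫ s in (0 : ℝ)..t, Real.exp (-μ * (t - s)) * (C₁ * f s + C₂ * f (τ * (⌊s / τ⌋ : ℤ)))) :
    ∀ t ≥ (0 : ℝ), f t ≤ M * a * Real.exp ((C₁ + C₂ * Real.exp (μ * τ) - μ) * t) :=
  gronwall_with_frozen_delay_general μ τ C₁ C₂ a M hμ hτ hC₁ hC₂ ha hM f hfc hineq
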